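/- Assume the lattice is minimal. Then every x ∈ L with x ≤ 0 and x ≠ 0 satisfies χ(x) > 0. Consequently, if Z_K ∈ L, then every l ∈ L with l ≥ Z_K and l ≠ Z_K satisfies χ(l) > 0. -/

import Mathlib

open scoped BigOperators

/-- A negative definite lattice on the free ℤ-module with basis indexed by `V`,
realized inside the ℚ-vector space `V → ℚ`.  The basis vector `E_v` is `Pi.single v 1`,
the symmetric bilinear form `B` takes integer values on basis vectors, is negative
definite, and has nonnegative off-diagonal entries. -/
structure LatticeData (V : Type*) [Fintype V] [DecidableEq V] where
  B : (V → ℚ) →ₗ[ℚ] (V → ℚ) →ₗ[ℚ] ℚ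
  symm : ∀ x y, B x y = B y x
  int_basis : ∀ u v : V, ∃ n : ℤ, B (Pi.single u 1) (Pi.single v 1) = (n : ℚ)
  negdef : ∀ x : V → ℚ, x ≠ 0 → B x x < 0
  offdiag : ∀ u v : V, u ≠ v → (0 : ℚ) ≤ B (Pi.single u 1) (Pi.single v 1)

variable {V : Type*} [Fintype V] [DecidableEq V]

/-- The basis vector `E_v`. -/
def Ev (v : V) : V → ℚ := Pi.single v 1

/-- `x` lies in the lattice `L` (has integral coefficients). -/
def inL (x : V → ℚ) : Prop := ∀ v, ∃ n : ℤ, x v = (n : ℚ)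

/-- The support `|x|` of a cycle. -/
def supp (x : V → ℚ) : Set V := {v | x v ≠ 0}

/-- `x ∈ L'`, the dual lattice: all pairings with basis vectors are integers. -/
def inLd (D : LatticeData V) (x : V → ℚ) : Prop := ∀ v, ∃ n : ℤ, D.B x (Ev v) = (n : ℚ)

/-- `x ∈ S'`: the antinef cone of the dual lattice. -/
def inS' (D : LatticeData V) (x : V → ℚ) : Prop := inLd D x ∧ ∀ v, D.B x (Ev v) ≤ 0

/-- The Riemann–Roch expression `χ(x) = -(x, x - Z_K)/2`. -/
def chi (D : LatticeData V) (ZK x : V → ℚ) : ℚ := -(D.B x (x - ZK)) / 2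

/-- `ZK` is the (anti)canonical cycle: `(Z_K, E_v) = (E_v,E_v) + 2` for all `v`. -/
def IsCanonical (D : LatticeData V) (ZK : V → ℚ) : Prop :=
  ∀ v, D.B ZK (Ev v) = D.B (Ev v) (Ev v) + 2

/-- The lattice is minimal: all self-intersections are at most `-2`. -/
def IsMinimal (D : LatticeData V) : Prop := ∀ v : V, D.B (Ev v) (Ev v) ≤ -2

/-- The lattice is elliptic: `χ(l) ≥ 0` for all `l ∈ L`, `l > 0`, with value 0 attained. -/
def Elliptic (D : LatticeData V) (ZK : V → ℚ) : Prop :=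
  (∀ l : V → ℚ, inL l → 0 ≤ l → l ≠ 0 → 0 ≤ chi D ZK l) ∧
  (∃ l : V → ℚ, inL l ∧ 0 ≤ l ∧ l ≠ 0 ∧ chi D ZK l = 0)

/-- The dual graph: `u ≠ v` are adjacent iff `(E_u, E_v) > 0`. -/
def dualGraph (D : LatticeData V) : SimpleGraph V where
  Adj u v := u ≠ v ∧ 0 < D.B (Ev u) (Ev v)
  symm := by
    constructor
    intro u v h
    exact ⟨h.1.symm, by rw [D.symm]; exact h.2⟩
  loopless := by
    constructor
    intro u h
    exact h.1 rfl

theorem test_preamble : True := trivial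

/-!
Minimality makes `Z_K` antinef, since `(Z_K, E_v) = (E_v, E_v) + 2 ≤ 0`; hence `(x, Z_K) ≥ 0`
for every `x ≤ 0`, and negative definiteness gives `2χ(x) = -(x, x) + (x, Z_K) > 0` for `x ≠ 0`.
The second claim follows from the symmetry `χ(Z_K - l) = χ(l)`.
-/

namespace LatticeData

variable (D : LatticeData V)

theorem B_eq_sum (x y : V → ℚ) : D.B x y = ∑ v, x v * D.B (Ev v) y := by
  have hx : x = ∑ v, x v • Ev v := by
    funext w
    simp [Ev, Finset.sum_apply, Pi.single_apply]
  conv_lhs => rw [hx]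
  simp only [map_sum, map_smul, LinearMap.sum_apply, LinearMap.smul_apply, smul_eq_mul]

theorem B_nonneg_of_nonpos {x y : V → ℚ} (hx : x ≤ 0) (hy : ∀ v, D.B y (Ev v) ≤ 0) :
    0 ≤ D.B x y := by
  rw [B_eq_sum]
  refine Finset.sum_nonneg fun v _ => mul_nonneg_of_nonpos_of_nonpos (hx v) ?_
  rw [D.symm]
  exact hy v

end LatticeData

theorem IsCanonical.B_Ev_nonpos {D : LatticeData V} {ZK : V → ℚ} (hZK : IsCanonical D ZK)
    (hmin : IsMinimal D) (v : V) : D.B ZK (Ev v) ≤ 0 := by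
  linarith [hZK v, hmin v]

theorem chi_pos_of_nonpos (D : LatticeData V) {ZK : V → ℚ} (hZK : ∀ v, D.B ZK (Ev v) ≤ 0)
    {x : V → ℚ} (hx : x ≤ 0) (hx0 : x ≠ 0) : 0 < chi D ZK x := by
  have hxx : D.B x x < 0 := D.negdef x hx0
  have hxZK : 0 ≤ D.B x ZK := D.B_nonneg_of_nonpos hx hZK
  rw [chi, map_sub]
  linarith

theorem chi_canonical_sub (D : LatticeData V) (ZK l : V → ℚ) : chi D ZK (ZK - l) = chi D ZK l := by
  simp only [chi, sub_sub_cancel_left, map_sub, map_neg, LinearMap.sub_apply, D.symm ZK l]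
  ring

theorem statement8_general {V : Type*} [Fintype V] [DecidableEq V]
    (D : LatticeData V) (ZK : V → ℚ) (hZK : IsCanonical D ZK)
    (hmin : IsMinimal D) :
    (∀ x : V → ℚ, inL x → x ≤ 0 → x ≠ 0 → 0 < chi D ZK x) ∧
    (inL ZK → ∀ l : V → ℚ, inL l → ZK ≤ l → l ≠ ZK → 0 < chi D ZK l) := by
  have hKnef := hZK.B_Ev_nonpos hmin
  refine ⟨fun x _ hx hx0 => chi_pos_of_nonpos D hKnef hx hx0, fun _ l _ hl hlK => ?_⟩
  rw [← chi_canonical_sub]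
  exact chi_pos_of_nonpos D hKnef (sub_nonpos.mpr hl) (sub_ne_zero.mpr (Ne.symm hlK))

/-- in a minimal lattice, every `x ∈ L` with `x ≤ 0`, `x ≠ 0` has
`χ(x) > 0`; consequently, if `Z_K ∈ L` then every `l ∈ L` with `l ≥ Z_K`, `l ≠ Z_K`
has `χ(l) > 0`. -/
theorem statement8 {V : Type*} [Fintype V] [DecidableEq V] [Nonempty V]
    (D : LatticeData V) (ZK : V → ℚ) (hZK : IsCanonical D ZK)
    (hmin : IsMinimal D) :
    (∀ x : V → ℚ, inL x → x ≤ 0 → x ≠ 0 → 0 < chi D ZK x) ∧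
    (inL ZK → ∀ l : V → ℚ, inL l → ZK ≤ l → l ≠ ZK → 0 < chi D ZK l) :=
  statement8_general D ZK hZK hmin
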